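/- Let Y be a separable metric space, κ > 0, and let ν and η be Borel measures on Y with η upper regular by open sets and σ-finite, such that D^κν(y) < ∞ for ν-almost every y ∈ Y. If there is c > 0 with D^κη(y) ≥ c for all y ∈ Y, then for every Borel set B ⊆ Y one has ν(B) ≤ 5^κ c^{-1} ∫_B D^κν dη; in particular ν ≪ η and the Radon–Nikodym derivative satisfies dν/dη ≤ 5^κ c^{-1} D^κν η-almost everywhere. -/

import Mathlib

open scoped ENNReal NNReal
open MeasureTheory Metric Filter Set Topology

/-- A measure is upper regular by open sets if the measure of every set is the infimum of the
measures of open sets containing it. -/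
def UpperRegular {Y : Type*} [TopologicalSpace Y] [MeasurableSpace Y] (η : Measure Y) : Prop :=
  ∀ A : Set Y, η A = ⨅ (U : Set Y) (_ : IsOpen U) (_ : A ⊆ U), η U

/-- The lower `κ`-density of a measure at a point. -/
noncomputable def dens {Y : Type*} [PseudoMetricSpace Y] [MeasurableSpace Y] (κ : ℝ)
    (ν : Measure Y) (y : Y) : ℝ≥0∞ :=
  Filter.liminf (fun r : ℝ => ν (Metric.ball y r) / ENNReal.ofReal (r ^ κ)) (𝓝[>] 0)


/-!
On a set `A` where `D^κ ν < t` and `D^κ η > b`, every point `y` has arbitrarily small radii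
`r` with `ν (B(y, 5r)) < t (5r)^κ` and `b r^κ ≤ η (B̄(y, r))`, the closed balls inside a given
open `U ⊇ A`. Vitali's covering lemma extracts disjoint closed balls whose fivefold enlargements
cover `A`, so `b ν(A) ≤ 5^κ t η(U)`, and upper regularity replaces `U` by `A`. Slicing a Borel set
into the level sets `q^n ≤ D^κ ν < q^(n+1)` and letting `q → 1` gives
`ν(B) ≤ 5^κ c⁻¹ ∫_B D^κ ν dη`; the level `D^κ ν = 0` is `ν`-null because `η` is σ-finite and the
level `∞` by hypothesis. Measurability of `D^κ ν` comes from the left continuity of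
`r ↦ ν (B(y, r)) / r^κ`, which lets the liminf run over rational radii.
-/

section Balls

variable {Y : Type*} [PseudoMetricSpace Y] [MeasurableSpace Y]

theorem tendsto_measure_ball_nhdsLT (ν : Measure Y) (y : Y) (r : ℝ) :
    Tendsto (fun s => ν (ball y s)) (𝓝[<] r) (𝓝 (ν (ball y r))) := by
  have hmono : Monotone fun s => ν (ball y s) := fun _ _ h => measure_mono (ball_subset_ball h)
  obtain ⟨u, hu_mono, hu_lt, hu⟩ := exists_seq_strictMono_tendsto' (sub_one_lt r)
  have hball : ball y r = ⋃ n, ball y (u n) := by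
    ext z
    simp only [mem_ball, mem_iUnion]
    exact ⟨fun hz => (hu.eventually (lt_mem_nhds hz)).exists,
      fun ⟨n, hn⟩ => hn.trans (hu_lt n).2⟩
  refine tendsto_order.2 ⟨fun a ha => ?_, fun a ha =>
    eventually_nhdsWithin_of_forall fun s hs => (hmono (le_of_lt hs)).trans_lt ha⟩
  have hballs : Monotone fun n => ball y (u n) := fun _ _ h => ball_subset_ball (hu_mono.monotone h)
  rw [hball, hballs.measure_iUnion] at ha
  obtain ⟨n, hn⟩ := lt_iSup_iff.1 ha
  filter_upwards [Ioo_mem_nhdsLT (hu_lt n).2] with s hs using hn.trans_le (hmono hs.1.le)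

theorem lowerSemicontinuous_measure_ball (ν : Measure Y) (r : ℝ) :
    LowerSemicontinuous fun y => ν (ball y r) := by
  intro y a ha
  obtain ⟨s, ha, hs⟩ := (((tendsto_measure_ball_nhdsLT ν y r).eventually (lt_mem_nhds ha)).and
    self_mem_nhdsWithin).exists
  filter_upwards [ball_mem_nhds y (sub_pos.2 hs)] with y' hy'
  exact ha.trans_le (measure_mono (ball_subset_ball' (by linarith [mem_ball'.1 hy'])))

theorem tendsto_measure_ball_div_rpow_nhdsLT (ν : Measure Y) (y : Y) (κ : ℝ) {r : ℝ} (hr : 0 < r) :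
    Tendsto (fun s => ν (ball y s) / ENNReal.ofReal (s ^ κ)) (𝓝[<] r)
      (𝓝 (ν (ball y r) / ENNReal.ofReal (r ^ κ))) := by
  have hpow : Tendsto (fun s : ℝ => ENNReal.ofReal (s ^ κ)) (𝓝[<] r) (𝓝 (ENNReal.ofReal (r ^ κ))) :=
    ((ENNReal.continuous_ofReal.tendsto _).comp
      (Real.continuousAt_rpow_const r κ (Or.inl hr.ne')).tendsto).mono_left nhdsWithin_le_nhds
  exact ENNReal.Tendsto.div (tendsto_measure_ball_nhdsLT ν y r)
    (Or.inr (ENNReal.ofReal_pos.2 (Real.rpow_pos_of_pos hr κ)).ne') hpow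
    (Or.inl ENNReal.ofReal_ne_top)

theorem dens_eq_liminf_rat (κ : ℝ) (ν : Measure Y) (y : Y) :
    dens κ ν y = liminf (fun q : ℚ => ν (ball y q) / ENNReal.ofReal ((q : ℝ) ^ κ))
      (comap ((↑) : ℚ → ℝ) (𝓝[>] 0)) := by
  have hbasis := nhdsGT_basis (0 : ℝ)
  rw [dens, hbasis.liminf_eq_iSup_iInf, (hbasis.comap _).liminf_eq_iSup_iInf]
  refine iSup_congr fun δ => iSup_congr fun _ => le_antisymm
    (le_iInf₂ fun q hq => iInf₂_le (q : ℝ) hq) (le_iInf₂ fun r hr => ?_)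
  obtain ⟨u, -, hu_lt, hu⟩ := Real.exists_seq_rat_strictMono_tendsto r
  have hu' : Tendsto (fun n => (u n : ℝ)) atTop (𝓝[<] r) :=
    tendsto_nhdsWithin_iff.2 ⟨hu, Eventually.of_forall hu_lt⟩
  refine ge_of_tendsto ((tendsto_measure_ball_div_rpow_nhdsLT ν y κ hr.1).comp hu') ?_
  filter_upwards [hu.eventually (lt_mem_nhds hr.1)] with n hn
  exact iInf₂_le (u n) ⟨hn, (hu_lt n).trans hr.2⟩

theorem measurable_dens [OpensMeasurableSpace Y] (κ : ℝ) (ν : Measure Y) :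
    Measurable (dens κ ν) := by
  obtain ⟨s, hs⟩ := (𝓝[>] (0 : ℝ)).exists_antitone_basis
  simp_rw [funext (dens_eq_liminf_rat κ ν)]
  exact Measurable.liminf' (fun q => (lowerSemicontinuous_measure_ball ν q).measurable.div_const _)
    ⟨hs.toHasBasis.comap _, to_countable _⟩ fun _ => to_countable _

theorem frequently_measure_ball_lt_mul_rpow {κ : ℝ} {ν : Measure Y} {y : Y} {t : ℝ≥0∞}
    (h : dens κ ν y < t) : ∃ᶠ r in 𝓝[>] 0, ν (ball y r) < t * ENNReal.ofReal (r ^ κ) := by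
  refine ((frequently_lt_of_liminf_lt (by isBoundedDefault) h).and_eventually
    self_mem_nhdsWithin).mono fun r ⟨hr, hr0⟩ => ?_
  exact (ENNReal.div_lt_iff (Or.inl (ENNReal.ofReal_pos.2 (Real.rpow_pos_of_pos hr0 κ)).ne')
    (Or.inl ENNReal.ofReal_ne_top)).1 hr

theorem eventually_mul_rpow_lt_measure_ball {κ : ℝ} {η : Measure Y} {y : Y} {b : ℝ≥0∞}
    (h : b < dens κ η y) : ∀ᶠ r in 𝓝[>] 0, b * ENNReal.ofReal (r ^ κ) < η (ball y r) := by
  filter_upwards [eventually_lt_of_lt_liminf h, self_mem_nhdsWithin] with r hr hr0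
  exact (ENNReal.lt_div_iff_mul_lt (Or.inl (ENNReal.ofReal_pos.2 (Real.rpow_pos_of_pos hr0 κ)).ne')
    (Or.inl ENNReal.ofReal_ne_top)).1 hr

theorem exists_radius_of_dens_bounds {κ : ℝ} {ν η : Measure Y} {y : Y} {U : Set Y} {b t : ℝ≥0∞}
    (hU : U ∈ 𝓝 y) (hb : b < dens κ η y) (ht : dens κ ν y < t) :
    ∃ r, 0 < r ∧ r ≤ 1 ∧ closedBall y r ⊆ U ∧
      ν (ball y (5 * r)) < t * ENNReal.ofReal ((5 * r) ^ κ) ∧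
      b * ENNReal.ofReal (r ^ κ) ≤ η (closedBall y r) := by
  have hsmall : ∀ᶠ r in 𝓝[>] (0 : ℝ), b * ENNReal.ofReal (r ^ κ) < η (ball y r) ∧ 0 < r ∧
      r ≤ 1 ∧ closedBall y r ⊆ U :=
    (eventually_mul_rpow_lt_measure_ball hb).and (eventually_mem_nhdsWithin.and
      (((eventually_le_nhds one_pos).and (eventually_closedBall_subset hU)).filter_mono
        nhdsWithin_le_nhds))
  obtain ⟨s, ⟨hη, hr0, hr1, hrU⟩, hν⟩ :=
    ((eventually_nhdsGT_zero_mul_left (by norm_num : (0 : ℝ) < 5⁻¹) hsmall).and_frequently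
      (frequently_measure_ball_lt_mul_rpow ht)).exists
  refine ⟨5⁻¹ * s, hr0, hr1, hrU, ?_, hη.le.trans (measure_mono ball_subset_closedBall)⟩
  rwa [mul_inv_cancel_left₀ (by norm_num : (5 : ℝ) ≠ 0)]

theorem mul_measure_le_of_dens_bounds [OpensMeasurableSpace Y] [TopologicalSpace.SeparableSpace Y]
    {κ : ℝ} {ν η : Measure Y} {A U : Set Y} {b t : ℝ≥0∞} (hU : IsOpen U) (hAU : A ⊆ U)
    (hb : ∀ y ∈ A, b < dens κ η y) (ht : ∀ y ∈ A, dens κ ν y < t) :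
    b * ν A ≤ ENNReal.ofReal (5 ^ κ) * t * η U := by
  choose! r hr0 hr1 hrU hν hη using fun y hy =>
    exists_radius_of_dens_bounds (hU.mem_nhds (hAU hy)) (hb y hy) (ht y hy)
  obtain ⟨u, huA, hdisj, hcov⟩ :=
    Vitali.exists_disjoint_subfamily_covering_enlargement_closedBall A id r 1 hr1 4 (by norm_num)
  simp only [id] at hdisj hcov
  have hu : u.Countable := hdisj.countable_of_nonempty_interior fun y hy =>
    ⟨y, ball_subset_interior_closedBall (mem_ball_self (hr0 y (huA hy)))⟩
  -- the enlarged balls `closedBall z (4 * r z)` lie in `ball z (5 * r z)`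
  have hAcov : A ⊆ ⋃ z ∈ u, ball z (5 * r z) := fun a ha => by
    obtain ⟨z, hz, hsub⟩ := hcov a ha
    exact mem_biUnion hz (closedBall_subset_ball (by linarith [hr0 z (huA hz)])
      (hsub (mem_closedBall_self (hr0 a ha).le)))
  calc b * ν A ≤ b * ∑' z : u, ν (ball z (5 * r z)) := by
        gcongr
        exact (measure_mono hAcov).trans (measure_biUnion_le ν hu _)
    _ = ∑' z : u, b * ν (ball z (5 * r z)) := ENNReal.tsum_mul_left.symm
    _ ≤ ∑' z : u, ENNReal.ofReal (5 ^ κ) * t * (b * ENNReal.ofReal (r z ^ κ)) := by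
        refine ENNReal.tsum_le_tsum fun z => ?_
        have hz := huA z.2
        calc b * ν (ball z (5 * r z)) ≤ b * (t * ENNReal.ofReal ((5 * r z) ^ κ)) := by
              gcongr; exact (hν z hz).le
          _ = _ := by
              rw [Real.mul_rpow (by norm_num) (hr0 z hz).le, ENNReal.ofReal_mul (by positivity)]
              ring
    _ ≤ ∑' z : u, ENNReal.ofReal (5 ^ κ) * t * η (closedBall z (r z)) := by
        gcongr with z
        exact hη z (huA z.2)
    _ = ENNReal.ofReal (5 ^ κ) * t * η (⋃ z ∈ u, closedBall z (r z)) := by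
        rw [ENNReal.tsum_mul_left, measure_biUnion hu hdisj fun _ _ => measurableSet_closedBall]
    _ ≤ ENNReal.ofReal (5 ^ κ) * t * η U := by
        gcongr
        exact iUnion₂_subset fun z hz => hrU z (huA hz)

end Balls

theorem UpperRegular.le_mul_of_forall_isOpen {Y : Type*} [TopologicalSpace Y] [MeasurableSpace Y]
    {η : Measure Y} (hreg : UpperRegular η) {A : Set Y} {a K : ℝ≥0∞} (hK : K ≠ ∞)
    (h : ∀ U, IsOpen U → A ⊆ U → a ≤ K * η U) : a ≤ K * η A := by
  rcases eq_or_ne K 0 with rfl | hK0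
  · simpa using h univ isOpen_univ (subset_univ A)
  rw [hreg A]
  simp_rw [ENNReal.mul_iInf_of_ne hK0 hK]
  exact le_iInf₂ fun U hU => le_iInf (h U hU)

theorem measure_le_of_dens_bounds {Y : Type*} [PseudoMetricSpace Y] [MeasurableSpace Y]
    [OpensMeasurableSpace Y] [TopologicalSpace.SeparableSpace Y] {κ c : ℝ} {ν η : Measure Y}
    (hreg : UpperRegular η) (hc : 0 < c) {A : Set Y} {t : ℝ≥0∞} (ht : t ≠ ∞)
    (hη : ∀ y ∈ A, ENNReal.ofReal c ≤ dens κ η y) (hν : ∀ y ∈ A, dens κ ν y < t) :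
    ν A ≤ ENNReal.ofReal (5 ^ κ * c⁻¹) * t * η A := by
  have hcA : ENNReal.ofReal c * ν A ≤ ENNReal.ofReal (5 ^ κ) * t * η A :=
    ENNReal.mul_le_of_forall_lt fun b hb a ha => (mul_le_mul_right ha.le b).trans <|
      hreg.le_mul_of_forall_isOpen (ENNReal.mul_ne_top ENNReal.ofReal_ne_top ht) fun U hU hAU =>
        mul_measure_le_of_dens_bounds hU hAU (fun y hy => hb.trans_le (hη y hy)) hν
  rw [ENNReal.ofReal_mul (by positivity), ENNReal.ofReal_inv_of_pos hc]
  calc ν A = (ENNReal.ofReal c)⁻¹ * (ENNReal.ofReal c * ν A) :=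
        (ENNReal.inv_mul_cancel_left (ENNReal.ofReal_pos.2 hc).ne' ENNReal.ofReal_ne_top).symm
    _ ≤ (ENNReal.ofReal c)⁻¹ * (ENNReal.ofReal (5 ^ κ) * t * η A) := by gcongr
    _ = _ := by ring

section LayerCake

variable {α : Type*} [MeasurableSpace α] {ν η : Measure α} {f : α → ℝ≥0∞} {C : ℝ≥0∞}

theorem measure_preimage_zero_eq_zero [SigmaFinite η] (hf : Measurable f) (hC : C ≠ ∞)
    (hbound : ∀ A, MeasurableSet A → ∀ t ≠ ∞, (∀ x ∈ A, f x < t) → ν A ≤ C * t * η A) :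
    ν (f ⁻¹' {0}) = 0 := by
  rw [← inter_univ (f ⁻¹' {0}), ← iUnion_spanningSets η, inter_iUnion]
  refine measure_iUnion_null fun k => ?_
  have hfin : C * η (f ⁻¹' {0} ∩ spanningSets η k) ≠ ∞ := ENNReal.mul_ne_top hC
    ((measure_mono inter_subset_right).trans_lt (measure_spanningSets_lt_top η k)).ne
  have hlim := ENNReal.Tendsto.const_mul ENNReal.tendsto_inv_nat_nhds_zero (Or.inr hfin)
  rw [mul_zero] at hlim
  refine le_antisymm (ge_of_tendsto hlim (eventually_atTop.2 ⟨1, fun n hn => ?_⟩)) zero_le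
  refine (hbound _ ((hf (measurableSet_singleton 0)).inter (measurableSet_spanningSets η k))
    (n : ℝ≥0∞)⁻¹ (ENNReal.inv_ne_top.2 (Nat.cast_ne_zero.2 (by omega))) fun x hx => ?_).trans_eq
    (by ring)
  rw [hx.1]
  exact ENNReal.inv_pos.2 (ENNReal.natCast_ne_top n)

theorem measure_inter_preimage_Ioo_le (hf : Measurable f)
    (hbound : ∀ A, MeasurableSet A → ∀ t ≠ ∞, (∀ x ∈ A, f x < t) → ν A ≤ C * t * η A)
    {q : ℝ≥0∞} (hq : 1 < q) (hq' : q ≠ ∞) {B : Set α} (hB : MeasurableSet B) :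
    ν (B ∩ f ⁻¹' Ioo 0 ∞) ≤ q * C * ∫⁻ x in B, f x ∂η := by
  set S : ℤ → Set α := fun n => B ∩ f ⁻¹' Ico (q ^ n) (q ^ (n + 1))
  have hq0 : q ≠ 0 := (zero_lt_one.trans hq).ne'
  have hS : B ∩ f ⁻¹' Ioo 0 ∞ = ⋃ n, S n := by
    rw [ENNReal.Ioo_zero_top_eq_iUnion_Ico_zpow hq hq', preimage_iUnion, inter_iUnion]
  have hSm : ∀ n, MeasurableSet (S n) := fun n => hB.inter (hf measurableSet_Ico)
  have hSd : Pairwise (Function.onFun Disjoint S) := by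
    have hmono : Monotone fun n : ℤ => q ^ n := fun m n h => ENNReal.zpow_le_of_le hq.le h
    have := hmono.pairwise_disjoint_on_Ico_succ
    simp only [Order.succ_eq_add_one] at this
    exact this.mono fun m n h => (h.preimage f).mono inter_subset_right inter_subset_right
  calc ν (B ∩ f ⁻¹' Ioo 0 ∞) ≤ ∑' n, ν (S n) := hS ▸ measure_iUnion_le S
    _ ≤ ∑' n, q * C * (q ^ n * η (S n)) := by
        refine ENNReal.tsum_le_tsum fun n => (hbound _ (hSm n) _ (ENNReal.zpow_lt_top hq0 hq' _).ne
          fun x hx => hx.2.2).trans_eq ?_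
        rw [ENNReal.zpow_add hq0 hq', zpow_one]
        ring
    _ ≤ ∑' n, q * C * ∫⁻ x in S n, f x ∂η := by
        gcongr with n
        rw [← setLIntegral_const]
        exact setLIntegral_mono' (hSm n) fun x hx => hx.2.1
    _ = q * C * ∫⁻ x in ⋃ n, S n, f x ∂η := by rw [ENNReal.tsum_mul_left, lintegral_iUnion hSm hSd]
    _ ≤ q * C * ∫⁻ x in B, f x ∂η := by
        gcongr
        exact iUnion_subset fun n => inter_subset_left

theorem measure_le_mul_setLIntegral_of_forall_lt [SigmaFinite η] (hf : Measurable f) (hC : C ≠ ∞)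
    (hfin : ∀ᵐ x ∂ν, f x < ∞)
    (hbound : ∀ A, MeasurableSet A → ∀ t ≠ ∞, (∀ x ∈ A, f x < t) → ν A ≤ C * t * η A)
    {B : Set α} (hB : MeasurableSet B) : ν B ≤ C * ∫⁻ x in B, f x ∂η := by
  have hpos : ∀ᵐ x ∂ν, x ∈ f ⁻¹' Ioo 0 ∞ := by
    filter_upwards [hfin, measure_eq_zero_iff_ae_notMem.1
      (measure_preimage_zero_eq_zero hf hC hbound)] with x h_top h_zero
    exact ⟨pos_iff_ne_zero.2 h_zero, h_top⟩
  rw [← measure_inter_conull (ae_iff.1 hpos)]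
  refine ENNReal.le_of_forall_lt_one_mul_le fun a ha => ?_
  rcases eq_or_ne a 0 with rfl | ha0
  · simp
  have ha_top : a ≠ ∞ := ha.ne_top
  calc a * ν (B ∩ f ⁻¹' Ioo 0 ∞) ≤ a * (a⁻¹ * C * ∫⁻ x in B, f x ∂η) := by
        gcongr
        exact measure_inter_preimage_Ioo_le hf hbound (ENNReal.one_lt_inv.2 ha)
          (ENNReal.inv_ne_top.2 ha0) hB
    _ = C * ∫⁻ x in B, f x ∂η := by
        rw [← mul_assoc, ← mul_assoc, ENNReal.mul_inv_cancel ha0 ha_top, one_mul]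

end LayerCake

theorem density_bounds_rnDeriv_general {Y : Type*}
    [MetricSpace Y] [TopologicalSpace.SeparableSpace Y] [MeasurableSpace Y] [BorelSpace Y]
    (κ : ℝ) (ν η : Measure Y) (hreg : UpperRegular η) [SigmaFinite η]
    (hν : ∀ᵐ y ∂ν, dens κ ν y < ⊤)
    (c : ℝ) (hc : 0 < c) (hη : ∀ y : Y, ENNReal.ofReal c ≤ dens κ η y) :
    (∀ B : Set Y, MeasurableSet B →
        ν B ≤ ENNReal.ofReal (5 ^ κ * c⁻¹) * ∫⁻ y in B, dens κ ν y ∂η) ∧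
      ν ≪ η ∧
      ∀ᵐ y ∂η, ν.rnDeriv η y ≤ ENNReal.ofReal (5 ^ κ * c⁻¹) * dens κ ν y := by
  have hmain : ∀ B : Set Y, MeasurableSet B →
      ν B ≤ ENNReal.ofReal (5 ^ κ * c⁻¹) * ∫⁻ y in B, dens κ ν y ∂η :=
    fun B => measure_le_mul_setLIntegral_of_forall_lt (measurable_dens κ ν) ENNReal.ofReal_ne_top hν
      fun A _ t ht hA => measure_le_of_dens_bounds hreg hc ht (fun y _ => hη y) hA
  refine ⟨hmain, Measure.AbsolutelyContinuous.mk fun s hs hs0 => ?_, ?_⟩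
  · simpa [setLIntegral_measure_zero _ _ hs0] using hmain s hs
  · refine ae_le_of_forall_setLIntegral_le_of_sigmaFinite (Measure.measurable_rnDeriv ν η)
      fun s hs _ => ?_
    rw [lintegral_const_mul _ (measurable_dens κ ν)]
    exact (Measure.setLIntegral_rnDeriv_le s).trans (hmain s hs)

theorem density_bounds_rnDeriv {Y : Type*}
    [MetricSpace Y] [TopologicalSpace.SeparableSpace Y] [MeasurableSpace Y] [BorelSpace Y]
    (κ : ℝ) (hκ : 0 < κ) (ν η : Measure Y) (hreg : UpperRegular η) [SigmaFinite η]
    (hν : ∀ᵐ y ∂ν, dens κ ν y < ⊤)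
    (c : ℝ) (hc : 0 < c) (hη : ∀ y : Y, ENNReal.ofReal c ≤ dens κ η y) :
    (∀ B : Set Y, MeasurableSet B →
        ν B ≤ ENNReal.ofReal (5 ^ κ * c⁻¹) * ∫⁻ y in B, dens κ ν y ∂η) ∧
      ν ≪ η ∧
      ∀ᵐ y ∂η, ν.rnDeriv η y ≤ ENNReal.ofReal (5 ^ κ * c⁻¹) * dens κ ν y :=
  density_bounds_rnDeriv_general κ ν η hreg hν c hc hη
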